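/- Let C ⊆ Ω be closed convex subsets of ℝ^d with nonempty interiors. Suppose f : Ω → ℝ is convex on C and differentiable on int(Ω); φ : Ω → ℝ is of Legendre type, continuous on Ω, and α-strongly convex with respect to a norm ‖·‖ on C for some α > 0; f is L-smooth with respect to ‖·‖ on C ∩ int(Ω) for some L > 0; and there exists G > 0 such that D_φ(z, θ_0) ≤ (G/2)‖θ_0 − z‖² for all z ∈ C (which holds in particular if φ is G-smooth with respect to ‖·‖ on C). Let (θ_t) be mirror descent iterates θ_{t+1} = argmin_{θ ∈ C} ( η⟨∇f(θ_t), θ⟩ + D_φ(θ, θ_t) ) initialized at θ_0 ∈ C ∩ int(Ω) with constant step size η ∈ (0, α/L]. Fix an integer T ≥ 1 and set λ_T := 1/(ηT). Then for every z ∈ C: inf_{w ∈ C} ( f(w) + (α/4)λ_T‖θ_0 − w‖² ) ≤ f(θ_T) + (α/4)λ_T‖θ_0 − θ_T‖² ≤ f(z) + ((G+α)/2)λ_T‖θ_0 − z‖². -/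

import Mathlib

/-!
Each mirror step satisfies `η (f θₜ₊₁ - f w) ≤ D(w, θₜ) - D(w, θₜ₊₁)` for every `w ∈ C`:
convexity bounds `f w` below by the tangent of `f` at `θₜ`, the descent lemma bounds `f θₜ₊₁`
above, and the first-order optimality of `θₜ₊₁`, rewritten by the three-point identity of the
Bregman divergence, links the two; since `η L ≤ α`, the term `D(θₜ₊₁, θₜ) ≥ (α/2) N(θₜ₊₁ - θₜ)²`
absorbs the smoothness remainder. Taking `w = θₜ` shows that `f` decreases along the iterates,
so telescoping gives `η T (f θ_T - f w) ≤ D(w, θ₀) - D(w, θ_T)`. The `G`-bound on `D(w, θ₀)`,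
strong convexity for `D(w, θ_T)` and `N(θ₀ - θ_T)² ≤ 2 N(θ₀ - w)² + 2 N(w - θ_T)²` give the upper
bound. The infimum is finite because `f` lies above an affine function and, in finite
dimension, `N` dominates a multiple of the Euclidean norm.
-/

open Finset Filter
open scoped RealInnerProductSpace

theorem Antitone.natCast_mul_le_sub {u e : ℕ → ℝ} (hu : Antitone u)
    (h : ∀ t, u (t + 1) ≤ e t - e (t + 1)) (T : ℕ) : T * u T ≤ e 0 - e T := by
  induction T with
  | zero => simp
  | succ T ih =>
    have hmono : (T : ℝ) * u (T + 1) ≤ T * u T :=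
      mul_le_mul_of_nonneg_left (hu T.le_succ) T.cast_nonneg
    push_cast
    linarith [h T]

theorem Seminorm.exists_pos_mul_norm_le {F : Type*} [NormedAddCommGroup F] [NormedSpace ℝ F]
    [FiniteDimensional ℝ F] (p : Seminorm ℝ F) (hp : ∀ x, x ≠ 0 → 0 < p x) :
    ∃ c > 0, ∀ x, c * ‖x‖ ≤ p x := by
  rcases subsingleton_or_nontrivial F with hF | hF
  · exact ⟨1, one_pos, fun x => by simp [Subsingleton.elim x 0]⟩
  have hcont : Continuous p := by
    simpa [continuousOn_univ] using p.convexOn.continuousOn_interior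
  obtain ⟨x₀, hx₀, hmin⟩ := (isCompact_sphere (0 : F) 1).exists_isMinOn
    (NormedSpace.sphere_nonempty.2 zero_le_one) hcont.continuousOn
  have hx₀ : ‖x₀‖ = 1 := mem_sphere_zero_iff_norm.1 hx₀
  refine ⟨p x₀, hp x₀ (ne_zero_of_norm_ne_zero (by simp [hx₀])), fun x => ?_⟩
  rcases eq_or_ne x 0 with rfl | hx
  · simp
  have hnx : 0 < ‖x‖ := norm_pos_iff.2 hx
  have := isMinOn_iff.1 hmin (‖x‖⁻¹ • x) (by simp [norm_smul, hnx.ne'])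
  rw [map_smul_eq_mul, norm_inv, norm_norm, le_inv_mul_iff₀ hnx, mul_comm] at this
  exact this

theorem Seminorm.sq_sub_le {F : Type*} [AddCommGroup F] [Module ℝ F] (p : Seminorm ℝ F)
    (x y z : F) : p (x - z) ^ 2 ≤ 2 * p (x - y) ^ 2 + 2 * p (y - z) ^ 2 := by
  have := le_map_sub_add_map_sub p x y z
  nlinarith [apply_nonneg p (x - y), apply_nonneg p (y - z), apply_nonneg p (x - z),
    sq_nonneg (p (x - y) - p (y - z))]

section InnerProductSpace

variable {E : Type*} [NormedAddCommGroup E] [InnerProductSpace ℝ E] [CompleteSpace E]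

theorem hasDerivAt_comp_add_smul {f : E → ℝ} {a v : E} {s : ℝ}
    (hf : DifferentiableAt ℝ f (a + s • v)) :
    HasDerivAt (fun t : ℝ => f (a + t • v)) ⟪gradient f (a + s • v), v⟫ s := by
  have hline : HasDerivAt (fun t : ℝ => a + t • v) v s := by
    simpa using ((hasDerivAt_id s).smul_const v).const_add a
  rw [inner_gradient_left]
  exact hf.hasFDerivAt.comp_hasDerivAt s hline

theorem ConvexOn.add_inner_gradient_le {C : Set E} {f : E → ℝ} (hf : ConvexOn ℝ C f)
    {x y : E} (hx : x ∈ C) (hy : y ∈ C) (hdf : DifferentiableAt ℝ f x) :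
    f x + ⟪gradient f x, y - x⟫ ≤ f y := by
  have hline : ConvexOn ℝ (Set.Icc 0 1) (fun t : ℝ => f (x + t • (y - x))) := by
    have hmaps : Set.MapsTo (AffineMap.lineMap x y) (Set.Icc (0 : ℝ) 1) C := fun t ht => by
      simpa [AffineMap.lineMap_apply, add_comm] using hf.1.add_smul_sub_mem hx hy ht
    have hcomp : (fun t : ℝ => f (x + t • (y - x))) = f ∘ AffineMap.lineMap x y := by
      ext t
      simp [AffineMap.lineMap_apply, add_comm]
    rw [hcomp]
    exact (hf.comp_affineMap _).subset hmaps (convex_Icc 0 1)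
  have := hline.le_slope_of_hasDerivAt (Set.left_mem_Icc.2 zero_le_one)
    (Set.right_mem_Icc.2 zero_le_one) zero_lt_one
    (hasDerivAt_comp_add_smul (by simpa using hdf))
  rw [slope_def_field] at this
  simp only [one_smul, zero_smul, add_zero, add_sub_cancel, sub_zero, div_one] at this
  linarith

theorem apply_add_le_of_inner_gradient_sub_le {f : E → ℝ} {a v : E} {c : ℝ}
    (hdf : ∀ s ∈ Set.Icc (0 : ℝ) 1, DifferentiableAt ℝ f (a + s • v))
    (hgrad : ∀ s ∈ Set.Icc (0 : ℝ) 1, ⟪gradient f (a + s • v) - gradient f a, v⟫ ≤ s * c) :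
    f (a + v) ≤ f a + ⟪gradient f a, v⟫ + c / 2 := by
  set ψ : ℝ → ℝ := fun s => f (a + s • v) - s * ⟪gradient f a, v⟫ - c / 2 * s ^ 2
  have hψ : ∀ s ∈ Set.Icc (0 : ℝ) 1,
      HasDerivAt ψ (⟪gradient f (a + s • v) - gradient f a, v⟫ - s * c) s := by
    intro s hs
    have := ((hasDerivAt_comp_add_smul (hdf s hs)).sub
      ((hasDerivAt_id s).mul_const ⟪gradient f a, v⟫)).sub
      ((hasDerivAt_pow 2 s).const_mul (c / 2))
    refine this.congr_deriv ?_
    rw [inner_sub_left]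
    ring
  have hanti : AntitoneOn ψ (Set.Icc 0 1) :=
    antitoneOn_of_hasDerivWithinAt_nonpos (convex_Icc 0 1)
      (fun s hs => (hψ s hs).continuousAt.continuousWithinAt)
      (fun s hs => (hψ s (interior_subset hs)).hasDerivWithinAt)
      fun s hs => sub_nonpos.2 (hgrad s (interior_subset hs))
  have := hanti (Set.left_mem_Icc.2 zero_le_one) (Set.right_mem_Icc.2 zero_le_one) zero_le_one
  simp only [ψ, zero_smul, one_smul, add_zero] at this
  linarith

theorem apply_le_add_inner_gradient_add_sq {U : Set E} (hU : Convex ℝ U) {f : E → ℝ}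
    (hdf : ∀ x ∈ U, DifferentiableAt ℝ f x) (p : Seminorm ℝ E) {L : ℝ}
    (hsmooth : ∀ x ∈ U, ∀ y ∈ U, ∀ u, ⟪gradient f x - gradient f y, u⟫ ≤ L * p (x - y) * p u)
    {a b : E} (ha : a ∈ U) (hb : b ∈ U) :
    f b ≤ f a + ⟪gradient f a, b - a⟫ + L / 2 * p (b - a) ^ 2 := by
  have hseg : ∀ s ∈ Set.Icc (0 : ℝ) 1, a + s • (b - a) ∈ U := fun s hs =>
    hU.add_smul_sub_mem ha hb hs
  have := apply_add_le_of_inner_gradient_sub_le (c := L * p (b - a) ^ 2)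
    (fun s hs => hdf _ (hseg s hs)) fun s hs => by
      have := hsmooth _ (hseg s hs) a ha (b - a)
      rw [add_sub_cancel_left, map_smul_eq_mul, Real.norm_of_nonneg hs.1] at this
      linarith
  rw [add_sub_cancel] at this
  linarith

theorem ConvexOn.bddBelow_range_add_mul_sq [FiniteDimensional ℝ E] {C : Set E} {f : E → ℝ}
    (hf : ConvexOn ℝ C f) {x₀ : E} (hx₀ : x₀ ∈ C) (hdf : DifferentiableAt ℝ f x₀)
    (p : Seminorm ℝ E) (hp : ∀ x, x ≠ 0 → 0 < p x) {β : ℝ} (hβ : 0 < β) :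
    BddBelow (Set.range fun w : C => f w + β * p (x₀ - w) ^ 2) := by
  obtain ⟨c, hc, hcp⟩ := p.exists_pos_mul_norm_le hp
  set K := ‖gradient f x₀‖ / c
  refine ⟨f x₀ - K ^ 2 / (4 * β), ?_⟩
  rintro _ ⟨⟨w, hw⟩, rfl⟩
  have hlin : -(K * p (x₀ - w)) ≤ ⟪gradient f x₀, w - x₀⟫ := by
    have hnorm : ‖gradient f x₀‖ * ‖w - x₀‖ ≤ K * p (x₀ - w) := by
      rw [map_sub_rev, div_mul_eq_mul_div, le_div_iff₀ hc]
      nlinarith [hcp (w - x₀), norm_nonneg (gradient f x₀)]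
    linarith [neg_abs_le ⟪gradient f x₀, w - x₀⟫, abs_real_inner_le_norm (gradient f x₀) (w - x₀)]
  have hquad : -K ^ 2 / (4 * β) ≤ -(K * p (x₀ - w)) + β * p (x₀ - w) ^ 2 := by
    rw [div_le_iff₀ (by positivity)]
    nlinarith [sq_nonneg (2 * β * p (x₀ - w) - K)]
  have := hf.add_inner_gradient_le hx₀ hw hdf
  rw [neg_div] at hquad
  dsimp only
  linarith

noncomputable def bregmanDiv (φ : E → ℝ) (u v : E) : ℝ := φ u - φ v - ⟪gradient φ v, u - v⟫

@[simp]
theorem bregmanDiv_self (φ : E → ℝ) (v : E) : bregmanDiv φ v v = 0 := by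
  simp [bregmanDiv]

theorem bregmanDiv_three_point (φ : E → ℝ) (w a b : E) :
    bregmanDiv φ w a - bregmanDiv φ w b - bregmanDiv φ b a =
      ⟪gradient φ b - gradient φ a, w - b⟫ := by
  simp only [bregmanDiv, inner_sub_left, inner_sub_right]
  ring

theorem mirror_step_optimality {C : Set E} (hC : Convex ℝ C) {φ : E → ℝ} {g a b w : E} {η : ℝ}
    (hb : b ∈ C) (hw : w ∈ C) (hφ : DifferentiableAt ℝ φ b)
    (hmin : ∀ u ∈ C, η * ⟪g, b⟫ + bregmanDiv φ b a ≤ η * ⟪g, u⟫ + bregmanDiv φ u a) :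
    η * ⟪g, b - w⟫ ≤ bregmanDiv φ w a - bregmanDiv φ w b - bregmanDiv φ b a := by
  have hF : HasFDerivAt (fun x => η * ⟪g, x⟫ + bregmanDiv φ x a)
      (η • innerSL ℝ g + (fderiv ℝ φ b - innerSL ℝ (gradient φ a))) b := by
    refine ((innerSL ℝ g).hasFDerivAt.const_mul η).add ?_
    have := (hφ.hasFDerivAt.sub_const (φ a)).sub
      ((innerSL ℝ (gradient φ a)).hasFDerivAt.comp b ((hasFDerivAt_id b).sub_const a))
    exact this.congr_fderiv (by rw [ContinuousLinearMap.comp_id])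
  have := (isMinOn_iff.2 hmin).localize.hasFDerivWithinAt_nonneg hF.hasFDerivWithinAt
    (sub_mem_posTangentConeAt_of_segment_subset (hC.segment_subset hb hw))
  rw [bregmanDiv_three_point, inner_sub_left, inner_gradient_left]
  simp only [add_apply, smul_apply, sub_apply, innerSL_apply_apply, smul_eq_mul,
    inner_sub_right] at this ⊢
  linarith

theorem mirror_step_le {C : Set E} {f φ : E → ℝ} (hf : ConvexOn ℝ C f) {a b w : E}
    (ha : a ∈ C) (hb : b ∈ C) (hw : w ∈ C) (hfa : DifferentiableAt ℝ f a)
    (hφb : DifferentiableAt ℝ φ b) (p : Seminorm ℝ E) {L α η : ℝ} (hη : 0 ≤ η) (hηL : η * L ≤ α)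
    (hdesc : f b ≤ f a + ⟪gradient f a, b - a⟫ + L / 2 * p (b - a) ^ 2)
    (hstrong : α / 2 * p (b - a) ^ 2 ≤ bregmanDiv φ b a)
    (hmin : ∀ u ∈ C, η * ⟪gradient f a, b⟫ + bregmanDiv φ b a ≤
      η * ⟪gradient f a, u⟫ + bregmanDiv φ u a) :
    η * (f b - f w) ≤ bregmanDiv φ w a - bregmanDiv φ w b := by
  have hopt := mirror_step_optimality hf.1 hb hw hφb hmin
  have hconv := hf.add_inner_gradient_le ha hw hfa
  have hgap : f b - f w ≤ ⟪gradient f a, b - w⟫ + L / 2 * p (b - a) ^ 2 := by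
    simp only [inner_sub_right] at hdesc hconv ⊢
    linarith
  have hsq := sq_nonneg (p (b - a))
  calc η * (f b - f w) ≤ η * ⟪gradient f a, b - w⟫ + η * L / 2 * p (b - a) ^ 2 := by
        nlinarith
    _ ≤ η * ⟪gradient f a, b - w⟫ + α / 2 * p (b - a) ^ 2 := by nlinarith
    _ ≤ bregmanDiv φ w a - bregmanDiv φ w b := by linarith

end InnerProductSpace

theorem mul_sub_le_of_mirror_step {E : Type*} {C : Set E} {f : E → ℝ} {D : E → E → ℝ}
    {θ : ℕ → E} {η : ℝ} (hη : 0 < η) (hθ : ∀ t, θ t ∈ C) (hD_self : ∀ x, D x x = 0)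
    (hD_nonneg : ∀ t, 0 ≤ D (θ t) (θ (t + 1)))
    (hstep : ∀ t, ∀ w ∈ C, η * (f (θ (t + 1)) - f w) ≤ D w (θ t) - D w (θ (t + 1)))
    (T : ℕ) {w : E} (hw : w ∈ C) :
    η * T * (f (θ T) - f w) ≤ D w (θ 0) - D w (θ T) := by
  have hanti : Antitone (f ∘ θ) := antitone_nat_of_succ_le fun t => by
    have := hstep t (θ t) (hθ t)
    rw [hD_self] at this
    show f (θ (t + 1)) ≤ f (θ t)
    nlinarith [hD_nonneg t]
  have := Antitone.natCast_mul_le_sub (u := fun t => η * (f (θ t) - f w))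
    (fun s t hst => mul_le_mul_of_nonneg_left (sub_le_sub_right (hanti hst) _) hη.le)
    (fun t => hstep t w hw) T
  linarith

theorem add_mul_sq_le_of_telescope {F : Type*} [AddCommGroup F] [Module ℝ F]
    (p : Seminorm ℝ F) {x₀ x z : F} {τ α G fx fz D₀ D₁ : ℝ} (hτ : 0 < τ) (hα : 0 ≤ α)
    (htel : τ * (fx - fz) ≤ D₀ - D₁) (hD₀ : D₀ ≤ G / 2 * p (x₀ - z) ^ 2)
    (hD₁ : α / 2 * p (z - x) ^ 2 ≤ D₁) :
    fx + α / 4 * (1 / τ) * p (x₀ - x) ^ 2 ≤ fz + (G + α) / 2 * (1 / τ) * p (x₀ - z) ^ 2 := by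
  have htri := mul_le_mul_of_nonneg_left (p.sq_sub_le x₀ z x) (by positivity : 0 ≤ α / 4)
  have key : τ * fx + α / 4 * p (x₀ - x) ^ 2 ≤ τ * fz + (G + α) / 2 * p (x₀ - z) ^ 2 := by
    linarith
  calc fx + α / 4 * (1 / τ) * p (x₀ - x) ^ 2
      = 1 / τ * (τ * fx + α / 4 * p (x₀ - x) ^ 2) := by field_simp
    _ ≤ 1 / τ * (τ * fz + (G + α) / 2 * p (x₀ - z) ^ 2) :=
        mul_le_mul_of_nonneg_left key (by positivity)
    _ = fz + (G + α) / 2 * (1 / τ) * p (x₀ - z) ^ 2 := by field_simp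

theorem md_training_envelope_general {d : ℕ}
    (C Om : Set (EuclideanSpace ℝ (Fin d)))
    (hCconv : Convex ℝ C)
    (hOmconv : Convex ℝ Om)
    (f φ : EuclideanSpace ℝ (Fin d) → ℝ)
    (hf_conv : ConvexOn ℝ C f)
    (hf_diff : ∀ x ∈ interior Om, DifferentiableAt ℝ f x)
    (N : EuclideanSpace ℝ (Fin d) → ℝ)
    (hN_pos : ∀ x, x ≠ 0 → 0 < N x)
    (hN_add : ∀ x y, N (x + y) ≤ N x + N y)
    (hN_smul : ∀ (c : ℝ) x, N (c • x) = |c| * N x)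
    (hφ_diff : ∀ x ∈ interior Om, DifferentiableAt ℝ φ x)
    (L α : ℝ) (hL : 0 < L) (hα : 0 < α)
    (hf_smooth : ∀ x ∈ C ∩ interior Om, ∀ y ∈ C ∩ interior Om,
      ∀ u : EuclideanSpace ℝ (Fin d),
        ⟪gradient f x - gradient f y, u⟫ ≤ L * N (x - y) * N u)
    (hφ_strong : ∀ x ∈ C ∩ interior Om, ∀ y ∈ C,
      φ x + ⟪gradient φ x, y - x⟫ + α / 2 * N (y - x) ^ 2 ≤ φ y)
    (D : EuclideanSpace ℝ (Fin d) → EuclideanSpace ℝ (Fin d) → ℝ)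
    (hD : ∀ u v, D u v = φ u - φ v - ⟪gradient φ v, u - v⟫)
    (η : ℝ) (hη : 0 < η ∧ η ≤ α / L)
    (θ : ℕ → EuclideanSpace ℝ (Fin d))
    (hθmem : ∀ t, θ t ∈ C ∩ interior Om)
    (hupd : ∀ t, ∀ w ∈ C,
      η * ⟪gradient f (θ t), θ (t + 1)⟫ + D (θ (t + 1)) (θ t) ≤
        η * ⟪gradient f (θ t), w⟫ + D w (θ t))
    -- the `G`-bound on the Bregman divergence from the initialization
    (G : ℝ)
    (hGbound : ∀ z ∈ C, D z (θ 0) ≤ G / 2 * N (θ 0 - z) ^ 2)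
    (T : ℕ) (hT : 1 ≤ T) (z : EuclideanSpace ℝ (Fin d)) (hz : z ∈ C) :
    (⨅ w : C, (f w + α / 4 * (1 / (η * T)) * N (θ 0 - w) ^ 2)) ≤
        f (θ T) + α / 4 * (1 / (η * T)) * N (θ 0 - θ T) ^ 2 ∧
      f (θ T) + α / 4 * (1 / (η * T)) * N (θ 0 - θ T) ^ 2 ≤
        f z + (G + α) / 2 * (1 / (η * T)) * N (θ 0 - z) ^ 2 := by
  obtain ⟨hη0, hηL⟩ := hη
  let p : Seminorm ℝ (EuclideanSpace ℝ (Fin d)) :=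
    Seminorm.of N hN_add fun c x => by rw [Real.norm_eq_abs]; exact hN_smul c x
  obtain rfl : D = bregmanDiv φ := funext fun u => funext fun v => hD u v
  have hstrong : ∀ x ∈ C ∩ interior Om, ∀ y ∈ C, α / 2 * N (y - x) ^ 2 ≤ bregmanDiv φ y x :=
    fun x hx y hy => by rw [hD]; linarith [hφ_strong x hx y hy]
  have hstep : ∀ t, ∀ w ∈ C, η * (f (θ (t + 1)) - f w) ≤
      bregmanDiv φ w (θ t) - bregmanDiv φ w (θ (t + 1)) := fun t w hw =>
    mirror_step_le hf_conv (hθmem t).1 (hθmem (t + 1)).1 hw (hf_diff _ (hθmem t).2)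
      (hφ_diff _ (hθmem (t + 1)).2) p hη0.le ((le_div_iff₀ hL).1 hηL)
      (apply_le_add_inner_gradient_add_sq (hCconv.inter hOmconv.interior)
        (fun x hx => hf_diff x hx.2) p hf_smooth (hθmem t) (hθmem (t + 1)))
      (hstrong _ (hθmem t) _ (hθmem (t + 1)).1) (hupd t)
  have htel := mul_sub_le_of_mirror_step hη0 (fun t => (hθmem t).1) (bregmanDiv_self φ)
    (fun t => le_trans (by positivity) (hstrong _ (hθmem (t + 1)) _ (hθmem t).1)) hstep T hz
  refine ⟨ciInf_le (hf_conv.bddBelow_range_add_mul_sq (hθmem 0).1 (hf_diff _ (hθmem 0).2) p hN_pos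
    (by positivity)) ⟨θ T, (hθmem T).1⟩, ?_⟩
  exact add_mul_sq_le_of_telescope p (mul_pos hη0 (by exact_mod_cast hT)) hα.le htel
    (hGbound z hz) (hstrong _ (hθmem T) z hz)

/-- **Training envelope for mirror descent.**
Under the mirror-descent assumptions (`C ⊆ Om` closed convex with nonempty interiors, `f`
convex on `C` and differentiable on `int Om`, `φ` of Legendre type, continuous on `Om` and
`α`-strongly convex w.r.t. a norm `N` on `C`, `f` `L`-smooth w.r.t. `N` on `C ∩ int Om`),
if moreover `D_φ(z, θ 0) ≤ (G/2) N(θ 0 - z)²` for all `z ∈ C` (as holds when `φ` is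
`G`-smooth w.r.t. `N` on `C`), then for mirror descent iterates with constant step size
`η ∈ (0, α/L]`, `T ≥ 1` and `λ_T := 1/(ηT)`, for every `z ∈ C`:
`inf_{w ∈ C} (f w + (α/4) λ_T N(θ0 - w)²) ≤ f (θ T) + (α/4) λ_T N(θ0 - θT)²
  ≤ f z + ((G+α)/2) λ_T N(θ0 - z)²`. -/
theorem md_training_envelope {d : ℕ}
    (C Om : Set (EuclideanSpace ℝ (Fin d)))
    (hCOm : C ⊆ Om) (hCclosed : IsClosed C) (hCconv : Convex ℝ C)
    (hOmclosed : IsClosed Om) (hOmconv : Convex ℝ Om)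
    (hCint : (interior C).Nonempty) (hOmint : (interior Om).Nonempty)
    (f φ : EuclideanSpace ℝ (Fin d) → ℝ)
    (hf_conv : ConvexOn ℝ C f)
    (hf_diff : ∀ x ∈ interior Om, DifferentiableAt ℝ f x)
    (N : EuclideanSpace ℝ (Fin d) → ℝ)
    (hN_pos : ∀ x, x ≠ 0 → 0 < N x) (hN_zero : N 0 = 0)
    (hN_add : ∀ x y, N (x + y) ≤ N x + N y)
    (hN_smul : ∀ (c : ℝ) x, N (c • x) = |c| * N x)
    (hφ_cont : ContinuousOn φ Om)
    (hφ_conv : ConvexOn ℝ Om φ)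
    (hφ_diff : ∀ x ∈ interior Om, DifferentiableAt ℝ φ x)
    (hφ_ess_smooth : ∀ (x : ℕ → EuclideanSpace ℝ (Fin d)) (y : EuclideanSpace ℝ (Fin d)),
      (∀ k, x k ∈ interior Om) → y ∈ frontier Om → Tendsto x atTop (nhds y) →
        Tendsto (fun k => ‖gradient φ (x k)‖) atTop atTop)
    (hφ_ess_strict : ∀ s ⊆ {x ∈ Om | ∃ g : EuclideanSpace ℝ (Fin d),
        ∀ y ∈ Om, φ x + ⟪g, y - x⟫ ≤ φ y}, Convex ℝ s → StrictConvexOn ℝ s φ)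
    (L α : ℝ) (hL : 0 < L) (hα : 0 < α)
    (hf_smooth : ∀ x ∈ C ∩ interior Om, ∀ y ∈ C ∩ interior Om,
      ∀ u : EuclideanSpace ℝ (Fin d),
        ⟪gradient f x - gradient f y, u⟫ ≤ L * N (x - y) * N u)
    (hφ_strong : ∀ x ∈ C ∩ interior Om, ∀ y ∈ C,
      φ x + ⟪gradient φ x, y - x⟫ + α / 2 * N (y - x) ^ 2 ≤ φ y)
    (D : EuclideanSpace ℝ (Fin d) → EuclideanSpace ℝ (Fin d) → ℝ)
    (hD : ∀ u v, D u v = φ u - φ v - ⟪gradient φ v, u - v⟫)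
    (η : ℝ) (hη : 0 < η ∧ η ≤ α / L)
    (θ : ℕ → EuclideanSpace ℝ (Fin d))
    (hθmem : ∀ t, θ t ∈ C ∩ interior Om)
    (hupd : ∀ t, ∀ w ∈ C,
      η * ⟪gradient f (θ t), θ (t + 1)⟫ + D (θ (t + 1)) (θ t) ≤
        η * ⟪gradient f (θ t), w⟫ + D w (θ t))
    -- the `G`-bound on the Bregman divergence from the initialization
    (G : ℝ) (hG : 0 < G)
    (hGbound : ∀ z ∈ C, D z (θ 0) ≤ G / 2 * N (θ 0 - z) ^ 2)
    (T : ℕ) (hT : 1 ≤ T) (z : EuclideanSpace ℝ (Fin d)) (hz : z ∈ C) :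
    (⨅ w : C, (f w + α / 4 * (1 / (η * T)) * N (θ 0 - w) ^ 2)) ≤
        f (θ T) + α / 4 * (1 / (η * T)) * N (θ 0 - θ T) ^ 2 ∧
      f (θ T) + α / 4 * (1 / (η * T)) * N (θ 0 - θ T) ^ 2 ≤
        f z + (G + α) / 2 * (1 / (η * T)) * N (θ 0 - z) ^ 2 :=
  md_training_envelope_general C Om hCconv hOmconv f φ hf_conv hf_diff N hN_pos hN_add hN_smul
    hφ_diff L α hL hα hf_smooth hφ_strong D hD η hη θ hθmem hupd G hGbound T hT z hz
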